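/- The Conrad filter N of an MV-algebra is a minimal prime implication filter if and only if N = {1}, in which case the MV-algebra is linearly ordered. -/
import Mathlib


/-- An MV-algebra `(α, ⊕, ¬, 0)` with the standard axioms. -/
class MV (α : Type*) extends Add α, Neg α, Zero α where
  add_assoc : ∀ a b c : α, a + (b + c) = (a + b) + c
  add_comm : ∀ a b : α, a + b = b + a
  add_zero : ∀ a : α, a + 0 = a
  neg_neg : ∀ a : α, - -a = a
  add_neg_zero : ∀ a : α, a + -(0 : α) = -(0 : α)
  luk : ∀ a b : α, -(-a + b) + b = -(-b + a) + a

namespace MV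

variable {α : Type*} [MV α]

/-- The top element `1 = ¬0`. -/
def one (α : Type*) [MV α] : α := -(0 : α)

/-- Implication `x → y = ¬x ⊕ y`. -/
def imp (a b : α) : α := -a + b

/-- Strong conjunction `x ⊗ y = ¬(¬x ⊕ ¬y)`. -/
def otimes (a b : α) : α := -(-a + -b)

/-- Join `x ∨ y = (x → y) → y`. -/
def sup (a b : α) : α := imp (imp a b) b

/-- Meet `x ∧ y = ¬(¬x ∨ ¬y)`. -/
def inf (a b : α) : α := -(sup (-a) (-b))

/-- Order: `x ≤ y` iff `x → y = 1`. -/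
def le (a b : α) : Prop := imp a b = one α

/-- Strict order. -/
def lt (a b : α) : Prop := le a b ∧ a ≠ b

/-- `n`-fold `⊗`-power. -/
def pow (a : α) : ℕ → α
  | 0 => one α
  | n + 1 => otimes a (pow a n)

/-- An implication filter: a lattice filter closed under `⊗`. -/
def IsImpFilter (F : Set α) : Prop :=
  one α ∈ F ∧ (∀ x ∈ F, ∀ y : α, le x y → y ∈ F) ∧
    (∀ x ∈ F, ∀ y ∈ F, inf x y ∈ F) ∧ (∀ x ∈ F, ∀ y ∈ F, otimes x y ∈ F)

/-- A prime implication filter: proper and `x ∨ y ∈ F → x ∈ F ∨ y ∈ F`. -/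
def IsPrime (F : Set α) : Prop :=
  IsImpFilter F ∧ F ≠ Set.univ ∧ ∀ x y : α, sup x y ∈ F → x ∈ F ∨ y ∈ F

/-- A minimal prime implication filter. -/
def IsMinimalPrime (F : Set α) : Prop :=
  IsPrime F ∧ ∀ G : Set α, IsPrime G → G ⊆ F → G = F

/-- A maximal proper implication filter. -/
def IsMaximal (F : Set α) : Prop :=
  IsImpFilter F ∧ F ≠ Set.univ ∧
    ∀ G : Set α, IsImpFilter G → G ≠ Set.univ → F ⊆ G → G = F

/-- A counit: `u < 1` joining to `1` with some `v < 1`. -/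
def IsCounit (u : α) : Prop :=
  lt u (one α) ∧ ∃ v : α, lt v (one α) ∧ sup u v = one α

/-- The implication filter generated by a set. -/
def gen (S : Set α) : Set α := ⋂₀ {F : Set α | IsImpFilter F ∧ S ⊆ F}

/-- The Conrad filter: the implication filter generated by all counits. -/
def conrad (α : Type*) [MV α] : Set α := gen {u : α | IsCounit u}

/-- The localizing filter `ℓ(P)`, generated by `{x → p : p ∈ P, x ∉ P}`. -/
def locFilter (P : Set α) : Set α :=
  gen {z : α | ∃ x : α, x ∉ P ∧ ∃ p ∈ P, z = imp x p}

end MV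

namespace MV

variable {α : Type*} [MV α]

/-! ### Basic arithmetic -/

lemma addA (a b c : α) : a + b + c = a + (b + c) := (MV.add_assoc a b c).symm
lemma addC (a b : α) : a + b = b + a := MV.add_comm a b
lemma addLC (a b c : α) : a + (b + c) = b + (a + c) := by
  rw [MV.add_assoc, MV.add_comm a b, ← MV.add_assoc]
lemma nn (a : α) : - -a = a := MV.neg_neg a
lemma addZ (a : α) : a + 0 = a := MV.add_zero a
lemma zAdd (a : α) : (0 : α) + a = a := by rw [addC]; exact MV.add_zero a
lemma addOne (a : α) : a + one α = one α := MV.add_neg_zero a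
lemma oneAdd (a : α) : one α + a = one α := by rw [addC]; exact addOne a
lemma negOne : -(one α) = (0 : α) := nn 0
lemma neg_inj {a b : α} (h : -a = -b) : a = b := by rw [← nn a, h, nn]

lemma neg_add_self (a : α) : -a + a = one α := by
  have h := MV.luk (one α) a
  rw [negOne, zAdd, addOne] at h
  exact h

lemma add_neg_self (a : α) : a + -a = one α := by rw [addC]; exact neg_add_self a

/-! ### Order -/

lemma le_intro {a b : α} (d : α) (h : b = d + a) : le a b := by
  show -a + b = one α
  rw [h, addC d a, ← addA, neg_add_self, oneAdd]

lemma le_dest {a b : α} (h : le a b) : ∃ d : α, b = d + a := by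
  have h2 := MV.luk a b
  rw [show -a + b = one α from h, negOne, zAdd] at h2
  exact ⟨-(-b + a), h2⟩

lemma le_refl (a : α) : le a a := le_intro 0 (zAdd a).symm
lemma le_of_eq {a b : α} (h : a = b) : le a b := h ▸ le_refl a

lemma le_trans {a b c : α} (h1 : le a b) (h2 : le b c) : le a c := by
  obtain ⟨d, rfl⟩ := le_dest h1
  obtain ⟨e, rfl⟩ := le_dest h2
  exact le_intro (e + d) (addA e d a).symm

lemma le_antisymm {a b : α} (h1 : le a b) (h2 : le b a) : a = b := by
  have h := MV.luk a b
  rw [show -a + b = one α from h1, show -b + a = one α from h2, negOne, zAdd, zAdd] at h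
  exact h.symm

lemma le_one (a : α) : le a (one α) := addOne (-a)
lemma zero_le (a : α) : le 0 a := oneAdd a

lemma add_le_add_left {a b : α} (c : α) (h : le a b) : le (c + a) (c + b) := by
  obtain ⟨d, rfl⟩ := le_dest h
  exact le_intro d (addLC c d a)

lemma add_le_add_right {a b : α} (c : α) (h : le a b) : le (a + c) (b + c) := by
  rw [addC a c, addC b c]; exact add_le_add_left c h

lemma neg_le_neg {a b : α} (h : le a b) : le (-b) (-a) := by
  show - -b + -a = one α
  rw [nn, addC]; exact h

/-! ### sup -/

lemma sup_def (a b : α) : sup a b = -(-a + b) + b := rfl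
lemma sup_comm (a b : α) : sup a b = sup b a := MV.luk a b
lemma le_sup_right (a b : α) : le b (sup a b) := le_intro (-(-a + b)) rfl
lemma le_sup_left (a b : α) : le a (sup a b) := by rw [sup_comm]; exact le_sup_right b a

lemma sup_of_le {a b : α} (h : le a b) : sup a b = b := by
  rw [sup_def, show -a + b = one α from h, negOne, zAdd]

lemma sup_mono_left {a c : α} (b : α) (h : le a c) : le (sup a b) (sup c b) := by
  have h1 := add_le_add_right b (neg_le_neg (add_le_add_right b (neg_le_neg h)))
  rw [← sup_def, ← sup_def] at h1
  exact h1

lemma sup_le {a b c : α} (h1 : le a c) (h2 : le b c) : le (sup a b) c := by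
  have h := sup_mono_left b h1
  rw [sup_comm c b, sup_of_le h2] at h
  exact h

lemma sup_le_sup {a b c d : α} (h1 : le a c) (h2 : le b d) : le (sup a b) (sup c d) :=
  sup_le (le_trans h1 (le_sup_left c d)) (le_trans h2 (le_sup_right c d))

lemma sup_one (a : α) : sup a (one α) = one α := sup_of_le (le_one a)
lemma one_sup (a : α) : sup (one α) a = one α := by rw [sup_comm]; exact sup_one a

lemma sup_sup (a b c : α) : sup (sup a c) (sup b c) = sup (sup a b) c := by
  apply le_antisymm
  · exact sup_le (sup_le_sup (le_sup_left a b) (le_refl c))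
      (sup_le_sup (le_sup_right a b) (le_refl c))
  · refine sup_le (sup_le ?_ ?_) ?_
    · exact le_trans (le_sup_left a c) (le_sup_left _ _)
    · exact le_trans (le_sup_left b c) (le_sup_right _ _)
    · exact le_trans (le_sup_right a c) (le_sup_left _ _)

/-! ### inf -/

lemma inf_def (a b : α) : inf a b = -(sup (-a) (-b)) := rfl
lemma inf_comm (a b : α) : inf a b = inf b a := by rw [inf_def, inf_def, sup_comm]

lemma inf_le_left (a b : α) : le (inf a b) a := by
  have h := neg_le_neg (le_sup_left (-a) (-b))
  rw [nn] at h
  exact h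

lemma inf_le_right (a b : α) : le (inf a b) b := by rw [inf_comm]; exact inf_le_left b a

lemma le_inf {a b c : α} (h1 : le c a) (h2 : le c b) : le c (inf a b) := by
  have h := neg_le_neg (sup_le (neg_le_neg h1) (neg_le_neg h2))
  rw [nn] at h
  exact h

lemma inf_of_le {a b : α} (h : le a b) : inf a b = a :=
  le_antisymm (inf_le_left a b) (le_inf (le_refl a) h)

/-! ### otimes -/

lemma otimes_def (a b : α) : otimes a b = -(-a + -b) := rfl
lemma otimes_comm (a b : α) : otimes a b = otimes b a := by
  rw [otimes_def, otimes_def, addC]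
lemma otimes_assoc (a b c : α) : otimes (otimes a b) c = otimes a (otimes b c) := by
  simp only [otimes_def, nn, addA]
lemma otimes_one (a : α) : otimes a (one α) = a := by
  rw [otimes_def, negOne, addZ, nn]
lemma one_otimes (a : α) : otimes (one α) a = a := by rw [otimes_comm]; exact otimes_one a

lemma otimes_le_left (a b : α) : le (otimes a b) a := by
  show -otimes a b + a = one α
  rw [otimes_def, nn, addC, ← addA, add_neg_self, oneAdd]

lemma otimes_le_right (a b : α) : le (otimes a b) b := by
  rw [otimes_comm]; exact otimes_le_left b a

lemma otimes_mono_left {a c : α} (b : α) (h : le a c) : le (otimes a b) (otimes c b) := by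
  have h1 := neg_le_neg (add_le_add_right (-b) (neg_le_neg h))
  exact h1

lemma otimes_mono_right {b d : α} (a : α) (h : le b d) : le (otimes a b) (otimes a d) := by
  rw [otimes_comm a b, otimes_comm a d]; exact otimes_mono_left a h

lemma otimes_le_otimes {a b c d : α} (h1 : le a c) (h2 : le b d) :
    le (otimes a b) (otimes c d) :=
  le_trans (otimes_mono_left b h1) (otimes_mono_right c h2)

lemma otimes_le_iff {a b c : α} : le (otimes a b) c ↔ le a (imp b c) := by
  show (-otimes a b + c = one α) ↔ (-a + (-b + c) = one α)
  rw [otimes_def, nn, addA]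

lemma otimes_mul_comm (A B C D : α) :
    otimes (otimes A B) (otimes C D) = otimes (otimes A C) (otimes B D) := by
  simp only [otimes_def, nn]
  rw [addA, addA, addLC (-B) (-C) (-D)]

/-! ### Divisibility and prelinearity -/

lemma inf_eq_otimes (a b : α) : inf a b = otimes a (imp a b) := by
  have h := MV.luk (-a) (-b)
  rw [nn, nn] at h
  rw [addC b (-a)] at h
  show -(-(- -a + -b) + -b) = -(-a + -(-a + b))
  rw [nn, h, addC (-(-a + b)) (-a)]

lemma neg_otimes_neg (a b : α) : -(otimes a (-b)) = imp a b := by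
  show -(otimes a (-b)) = -a + b
  rw [otimes_def, nn, nn]

lemma sub_add (a b : α) : otimes a (-b) + b = sup a b := by
  rw [otimes_def, nn, sup_def]

lemma inf_add_sub (a b : α) : inf a b + otimes a (-b) = a := by
  have h : inf a b = otimes a (-(otimes a (-b))) := by rw [inf_eq_otimes, neg_otimes_neg]
  rw [h, sub_add, sup_comm, sup_of_le (otimes_le_left a (-b))]

lemma inf_sub_sub_eq_zero (x y : α) : inf (otimes x (-y)) (otimes y (-x)) = 0 := by
  have hmp : inf x y + otimes x (-y) = x := inf_add_sub x y
  have hmq : inf x y + otimes y (-x) = y := by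
    rw [inf_comm]; exact inf_add_sub y x
  have h1 : le (inf (otimes x (-y)) (otimes y (-x)) + inf x y) (inf x y) := by
    refine le_inf ?_ ?_
    · have h := add_le_add_right (inf x y) (inf_le_left (otimes x (-y)) (otimes y (-x)))
      rw [addC (otimes x (-y)) (inf x y), hmp] at h
      exact h
    · have h := add_le_add_right (inf x y) (inf_le_right (otimes x (-y)) (otimes y (-x)))
      rw [addC (otimes y (-x)) (inf x y), hmq] at h
      exact h
  have h2 : inf (otimes x (-y)) (otimes y (-x)) + inf x y = inf x y :=
    le_antisymm h1 (le_intro _ rfl)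
  have htm : le (inf (otimes x (-y)) (otimes y (-x))) (-(inf x y)) :=
    le_trans (inf_le_left _ _)
      (le_trans (otimes_le_right x (-y)) (neg_le_neg (inf_le_right x y)))
  have hres : inf (-(inf x y)) (inf (otimes x (-y)) (otimes y (-x)))
      = inf (otimes x (-y)) (otimes y (-x)) := by
    rw [inf_comm]; exact inf_of_le htm
  have himp : imp (-(inf x y)) (inf (otimes x (-y)) (otimes y (-x))) = inf x y := by
    show - -(inf x y) + inf (otimes x (-y)) (otimes y (-x)) = inf x y
    rw [nn, addC]; exact h2
  calc inf (otimes x (-y)) (otimes y (-x))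
      = otimes (-(inf x y)) (imp (-(inf x y)) (inf (otimes x (-y)) (otimes y (-x)))) := by
        rw [← inf_eq_otimes, hres]
    _ = 0 := by rw [himp, otimes_def, nn, add_neg_self, negOne]

lemma prelinear (x y : α) : sup (imp x y) (imp y x) = one α := by
  have e : sup (imp x y) (imp y x) = -(inf (otimes x (-y)) (otimes y (-x))) := by
    rw [inf_def, nn, neg_otimes_neg, neg_otimes_neg]
  rw [e, inf_sub_sub_eq_zero]
  rfl

end MV

namespace MV

variable {α : Type*} [MV α]

/-! ### Filters -/

lemma isImpFilter_singleton : IsImpFilter ({one α} : Set α) := by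
  refine ⟨rfl, ?_, ?_, ?_⟩
  · intro x hx y hy
    rw [Set.mem_singleton_iff] at *
    subst hx
    exact le_antisymm (le_one y) hy
  · intro x hx y hy
    rw [Set.mem_singleton_iff] at *
    subst hx; subst hy
    exact inf_of_le (le_refl _)
  · intro x hx y hy
    rw [Set.mem_singleton_iff] at *
    subst hx; subst hy
    exact otimes_one _

lemma mem_gen {S : Set α} {x : α} (hx : x ∈ S) : x ∈ gen S :=
  fun _ hF => hF.2 hx

lemma gen_subset {S F : Set α} (hF : IsImpFilter F) (hSF : S ⊆ F) : gen S ⊆ F :=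
  fun _ hx => hx F ⟨hF, hSF⟩

lemma gen_isImpFilter (S : Set α) : IsImpFilter (gen S) := by
  refine ⟨?_, ?_, ?_, ?_⟩
  · exact fun F hF => hF.1.1
  · intro x hx y hxy F hF
    exact hF.1.2.1 x (hx F hF) y hxy
  · intro x hx y hy F hF
    exact hF.1.2.2.1 x (hx F hF) y (hy F hF)
  · intro x hx y hy F hF
    exact hF.1.2.2.2 x (hx F hF) y (hy F hF)

/-! ### Powers -/

lemma pow_zero' (a : α) : pow a 0 = one α := rfl
lemma pow_succ' (a : α) (n : ℕ) : pow a (n + 1) = otimes a (pow a n) := rfl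

lemma pow_add' (a : α) (m n : ℕ) : pow a (m + n) = otimes (pow a m) (pow a n) := by
  induction m with
  | zero => rw [Nat.zero_add, pow_zero', one_otimes]
  | succ m ih => rw [Nat.succ_add, pow_succ', pow_succ', ih, otimes_assoc]

lemma pow_mem {F : Set α} (hF : IsImpFilter F) {a : α} (ha : a ∈ F) (n : ℕ) :
    pow a n ∈ F := by
  induction n with
  | zero => exact hF.1
  | succ n ih => exact hF.2.2.2 a ha (pow a n) ih

/-! ### Distributivity and Riesz -/

lemma otimes_sup (x a b : α) : otimes x (sup a b) = sup (otimes x a) (otimes x b) := by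
  apply le_antisymm
  · have h1 : le (otimes a x) (sup (otimes x a) (otimes x b)) := by
      rw [otimes_comm a x]; exact le_sup_left _ _
    have h2 : le (otimes b x) (sup (otimes x a) (otimes x b)) := by
      rw [otimes_comm b x]; exact le_sup_right _ _
    have h3 := otimes_le_iff.mpr (sup_le (otimes_le_iff.mp h1) (otimes_le_iff.mp h2))
    rw [otimes_comm (sup a b) x] at h3
    exact h3
  · exact sup_le (otimes_mono_right x (le_sup_left a b))
      (otimes_mono_right x (le_sup_right a b))

lemma sup_otimes (a b x : α) : otimes (sup a b) x = sup (otimes a x) (otimes b x) := by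
  rw [otimes_comm (sup a b) x, otimes_sup, otimes_comm x a, otimes_comm x b]

lemma riesz (a b : α) : ∀ k m n : ℕ, m + n = k →
    le (pow (sup a b) k) (sup (pow a m) (pow b n)) := by
  intro k
  induction k using Nat.strong_induction_on with
  | _ k ih =>
    intro m n hmn
    match m, n with
    | 0, n =>
      have e : sup (pow a 0) (pow b n) = one α := one_sup _
      exact le_trans (le_one _) (le_of_eq e.symm)
    | m + 1, 0 =>
      have e : sup (pow a (m + 1)) (pow b 0) = one α := sup_one _
      exact le_trans (le_one _) (le_of_eq e.symm)
    | m + 1, n + 1 =>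
      subst hmn
      have hlt : m + 1 + n < m + 1 + (n + 1) := by omega
      have d1 : le (pow (sup a b) (m + 1 + n)) (sup (pow a m) (pow b (n + 1))) :=
        ih (m + 1 + n) hlt m (n + 1) (by omega)
      have d2 : le (pow (sup a b) (m + 1 + n)) (sup (pow a (m + 1)) (pow b n)) :=
        ih (m + 1 + n) hlt (m + 1) n (by omega)
      show le (otimes (sup a b) (pow (sup a b) (m + 1 + n)))
        (sup (pow a (m + 1)) (pow b (n + 1)))
      have hx : le (otimes a (pow (sup a b) (m + 1 + n)))
          (sup (pow a (m + 1)) (pow b (n + 1))) := by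
        refine le_trans (otimes_mono_right a d1) ?_
        rw [otimes_sup]
        exact sup_le_sup (le_of_eq rfl) (otimes_le_right _ _)
      have hy : le (otimes b (pow (sup a b) (m + 1 + n)))
          (sup (pow a (m + 1)) (pow b (n + 1))) := by
        refine le_trans (otimes_mono_right b d2) ?_
        rw [otimes_sup]
        refine le_trans (sup_le_sup (otimes_le_right _ _) (le_of_eq rfl)) ?_
        exact sup_le_sup (le_refl _) (le_of_eq rfl)
      rw [sup_otimes]
      exact sup_le hx hy

/-! ### The filter generated by `F ∪ {a}` -/

def fext (F : Set α) (a : α) : Set α :=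
  {z | ∃ n : ℕ, ∃ f ∈ F, le (otimes (pow a n) f) z}

lemma subset_fext (F : Set α) (a : α) : F ⊆ fext F a := by
  intro z hz
  refine ⟨0, z, hz, ?_⟩
  rw [pow_zero', one_otimes]
  exact le_refl z

lemma mem_fext_self {F : Set α} (hF : IsImpFilter F) (a : α) : a ∈ fext F a := by
  refine ⟨1, one α, hF.1, ?_⟩
  rw [otimes_one, show (1 : ℕ) = 0 + 1 from rfl, pow_succ', pow_zero', otimes_one]
  exact le_refl a

lemma fext_isImpFilter {F : Set α} (hF : IsImpFilter F) (a : α) :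
    IsImpFilter (fext F a) := by
  obtain ⟨h1, hup, hinf, hot⟩ := hF
  refine ⟨⟨0, one α, h1, ?_⟩, ?_, ?_, ?_⟩
  · rw [pow_zero', one_otimes]; exact le_refl _
  · rintro x ⟨n, f, hf, hle⟩ y hxy
    exact ⟨n, f, hf, le_trans hle hxy⟩
  · rintro x ⟨n, f, hf, hle⟩ y ⟨n', f', hf', hle'⟩
    refine ⟨n + n', otimes f f', hot f hf f' hf', ?_⟩
    rw [pow_add', otimes_mul_comm]
    exact le_inf (le_trans (otimes_le_left _ _) hle) (le_trans (otimes_le_right _ _) hle')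
  · rintro x ⟨n, f, hf, hle⟩ y ⟨n', f', hf', hle'⟩
    refine ⟨n + n', otimes f f', hot f hf f' hf', ?_⟩
    rw [pow_add', otimes_mul_comm]
    exact otimes_le_otimes hle hle'

end MV

namespace MV

variable {α : Type*} [MV α]

/-! ### Counits and the Conrad filter -/

lemma no_counit_of_conrad_trivial (h : conrad α = {one α}) : ∀ u : α, ¬IsCounit u := by
  intro u hu
  have hm : u ∈ conrad α := mem_gen hu
  rw [h, Set.mem_singleton_iff] at hm
  exact hu.1.2 hm

lemma conrad_trivial_of_no_counit (h : ∀ u : α, ¬IsCounit u) : conrad α = {one α} := by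
  apply Set.Subset.antisymm
  · exact gen_subset isImpFilter_singleton (fun u hu => absurd hu (h u))
  · exact Set.singleton_subset_iff.mpr (gen_isImpFilter _).1

lemma linear_of_no_counit (h : ∀ u : α, ¬IsCounit u) (a b : α) : le a b ∨ le b a := by
  by_cases h1 : imp a b = one α
  · exact Or.inl h1
  by_cases h2 : imp b a = one α
  · exact Or.inr h2
  exact absurd ⟨⟨le_one _, h1⟩, imp b a, ⟨le_one _, h2⟩, prelinear a b⟩ (h (imp a b))

lemma isPrime_singleton (hNT : (0 : α) ≠ one α) (h : ∀ u : α, ¬IsCounit u) :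
    IsPrime ({one α} : Set α) := by
  refine ⟨isImpFilter_singleton, ?_, ?_⟩
  · intro he
    have h0 : (0 : α) ∈ ({one α} : Set α) := by rw [he]; trivial
    exact hNT h0
  · intro x y hxy
    rw [Set.mem_singleton_iff] at hxy
    by_cases hx : x = one α
    · exact Or.inl hx
    by_cases hy : y = one α
    · exact Or.inr hy
    exact absurd ⟨⟨le_one x, hx⟩, y, ⟨le_one y, hy⟩, hxy⟩ (h x)

lemma conrad_trivial_of_minimal (h : IsMinimalPrime (conrad α)) :
    conrad α = {one α} := by
  obtain ⟨⟨hNf, hNproper, hNprime⟩, hNmin⟩ := h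
  apply conrad_trivial_of_no_counit
  intro u hu
  have huN : u ∈ conrad α := mem_gen hu
  obtain ⟨t0, ht0⟩ : ∃ t0, t0 ∉ conrad α := by
    by_contra hall; push_neg at hall
    exact hNproper (Set.eq_univ_iff_forall.mpr hall)
  set J : Set α := {z | ∃ t, t ∉ conrad α ∧ le z (sup t u)} with hJdef
  have hJdown : ∀ z ∈ J, ∀ w : α, le w z → w ∈ J := by
    rintro z ⟨t, ht, hz⟩ w hw; exact ⟨t, ht, le_trans hw hz⟩
  have hJsup : ∀ z ∈ J, ∀ z' ∈ J, sup z z' ∈ J := by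
    rintro z ⟨t, ht, hz⟩ z' ⟨t', ht', hz'⟩
    refine ⟨sup t t', ?_, ?_⟩
    · intro hmem
      rcases hNprime t t' hmem with hc | hc
      exacts [ht hc, ht' hc]
    · exact le_trans (sup_le_sup hz hz') (le_of_eq (sup_sup t t' u))
  have hJu : u ∈ J := ⟨t0, ht0, le_sup_right t0 u⟩
  have hJone : one α ∉ J := by
    rintro ⟨t, ht, hle⟩
    have hsup : sup t u = one α := le_antisymm (le_one _) hle
    have htc : IsCounit t := by
      refine ⟨⟨le_one t, ?_⟩, u, hu.1, hsup⟩
      intro h1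
      rw [h1] at ht
      exact ht ((gen_isImpFilter _).1)
    exact ht (mem_gen htc)
  -- Zorn's lemma
  set SS : Set (Set α) := {G | IsImpFilter G ∧ G ∩ J = ∅} with hSSdef
  have hzorn : ∀ c ⊆ SS, IsChain (· ⊆ ·) c → c.Nonempty → ∃ ub ∈ SS, ∀ s ∈ c, s ⊆ ub := by
    rintro c hc hchain ⟨G0, hG0⟩
    refine ⟨⋃₀ c, ⟨⟨?_, ?_, ?_, ?_⟩, ?_⟩, fun s hs => Set.subset_sUnion_of_mem hs⟩
    · exact ⟨G0, hG0, (hc hG0).1.1⟩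
    · rintro x ⟨G, hG, hx⟩ y hxy
      exact ⟨G, hG, (hc hG).1.2.1 x hx y hxy⟩
    · rintro x ⟨G, hG, hx⟩ y ⟨G', hG', hy⟩
      rcases eq_or_ne G G' with rfl | hne
      · exact ⟨G, hG, (hc hG).1.2.2.1 x hx y hy⟩
      rcases hchain hG hG' hne with hss | hss
      · exact ⟨G', hG', (hc hG').1.2.2.1 x (hss hx) y hy⟩
      · exact ⟨G, hG, (hc hG).1.2.2.1 x hx y (hss hy)⟩
    · rintro x ⟨G, hG, hx⟩ y ⟨G', hG', hy⟩
      rcases eq_or_ne G G' with rfl | hne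
      · exact ⟨G, hG, (hc hG).1.2.2.2 x hx y hy⟩
      rcases hchain hG hG' hne with hss | hss
      · exact ⟨G', hG', (hc hG').1.2.2.2 x (hss hx) y hy⟩
      · exact ⟨G, hG, (hc hG).1.2.2.2 x hx y (hss hy)⟩
    · apply Set.eq_empty_iff_forall_notMem.mpr
      rintro x ⟨⟨G, hG, hxG⟩, hxJ⟩
      have hd := (hc hG).2
      have : x ∈ G ∩ J := Set.mem_inter hxG hxJ
      rw [hd] at this
      exact this
  have hone_mem : ({one α} : Set α) ∈ SS := by
    refine ⟨isImpFilter_singleton, ?_⟩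
    apply Set.eq_empty_iff_forall_notMem.mpr
    rintro x ⟨hx1, hxJ⟩
    rw [Set.mem_singleton_iff] at hx1
    rw [hx1] at hxJ
    exact hJone hxJ
  obtain ⟨M, hM1, hMmax⟩ := zorn_subset_nonempty SS hzorn {one α} hone_mem
  have hMf : IsImpFilter M := hMmax.1.1
  have hMJ : M ∩ J = ∅ := hMmax.1.2
  have hMdisj : ∀ x ∈ M, x ∉ J := by
    intro x hx hxJ
    have : x ∈ M ∩ J := Set.mem_inter hx hxJ
    rw [hMJ] at this
    exact this
  have hMN : M ⊆ conrad α := by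
    intro z hz
    by_contra hzN
    exact hMdisj z hz ⟨z, hzN, le_sup_left z u⟩
  have hMproper : M ≠ Set.univ := by
    intro he
    exact hMdisj u (by rw [he]; trivial) hJu
  have hMprime : ∀ x y : α, sup x y ∈ M → x ∈ M ∨ y ∈ M := by
    intro x y hxy
    by_contra hcon; push_neg at hcon
    obtain ⟨hx, hy⟩ := hcon
    have hmeet : ∀ w : α, w ∉ M → ∃ e ∈ J, ∃ n : ℕ, ∃ f ∈ M, le (otimes (pow w n) f) e := by
      intro w hw
      by_contra hno; push_neg at hno
      have hdisj : fext M w ∩ J = ∅ := by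
        apply Set.eq_empty_iff_forall_notMem.mpr
        rintro e ⟨⟨n, f, hf, hle⟩, heJ⟩
        exact (hno e heJ n f hf) hle
      have hsub : fext M w ⊆ M := hMmax.2 ⟨fext_isImpFilter hMf w, hdisj⟩ (subset_fext M w)
      exact hw (hsub (mem_fext_self hMf w))
    obtain ⟨e, heJ, n, f, hf, hle⟩ := hmeet x hx
    obtain ⟨e', heJ', n', g, hg, hle'⟩ := hmeet y hy
    have hwM : otimes (pow (sup x y) (n + n')) (otimes f g) ∈ M :=
      hMf.2.2.2 _ (pow_mem hMf hxy (n + n')) _ (hMf.2.2.2 f hf g hg)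
    have hwJ : otimes (pow (sup x y) (n + n')) (otimes f g) ∈ J := by
      apply hJdown (sup e e') (hJsup e heJ e' heJ')
      have hr : le (pow (sup x y) (n + n')) (sup (pow x n) (pow y n')) :=
        riesz x y (n + n') n n' rfl
      refine le_trans (otimes_mono_left _ hr) ?_
      rw [sup_otimes]
      refine sup_le_sup ?_ ?_
      · refine le_trans ?_ hle
        rw [← otimes_assoc]
        exact otimes_le_left _ _
      · refine le_trans ?_ hle'
        exact otimes_mono_right _ (otimes_le_right f g)
    exact hMdisj _ hwM hwJ
  have hMeqN := hNmin M ⟨hMf, hMproper, hMprime⟩ hMN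
  have huM : u ∈ M := by rw [hMeqN]; exact huN
  exact hMdisj u huM hJu

end MV


open MV
/-- The Conrad filter is a minimal prime iff it is `{1}`, in which
case the MV-algebra is linearly ordered. -/
theorem conrad_minimal_iff_trivial {α : Type*} [MV α] (hNT : (0 : α) ≠ one α) :
    (IsMinimalPrime (conrad α) ↔ conrad α = {one α}) ∧
      (conrad α = {one α} → ∀ a b : α, le a b ∨ le b a) := by
  constructor
  · constructor
    · exact MV.conrad_trivial_of_minimal
    · intro h
      rw [h]
      exact ⟨MV.isPrime_singleton hNT (MV.no_counit_of_conrad_trivial h),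
        fun G hG hsub => Set.Subset.antisymm hsub (Set.singleton_subset_iff.mpr hG.1.1)⟩
  · intro h a b
    exact MV.linear_of_no_counit (MV.no_counit_of_conrad_trivial h) a b
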